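/- Let p be a prime, let A ∈ ℤ with gcd(A, p) = 1, and let k be a positive integer with k ≡ 1 (mod 3). Then S(A x³, p^k) = p^{(2k−2)/3} · S(A x³, p). -/

import Mathlib

/-!
Write `j = u + p^(t+2) w` with `u < p^(t+2)`, `w < p^2`. Modulo `p^(t+4)` the cube expands as
`A j³ ≡ A u³ + 3 A u² p^(t+2) w`, so the sum over `w` is a complete character sum modulo `p²`
in `3 A u² w`; it vanishes unless `p² ∣ 3 A u²`, i.e. unless `p ∣ u`. The surviving terms
`u = p m` give `S(A x³, p^(t+4)) = p² S(A x³, p^(t+1))`, and induction on `k = 3m + 1` finishes.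
-/

noncomputable section

namespace CubicAppendix

/-- `S(Ax³, c) := ∑_{j=0}^{c−1} exp(2πi A j³ / c)`. -/
def S (A : ℤ) (c : ℕ) : ℂ :=
  ∑ j ∈ Finset.range c,
    Complex.exp (2 * Real.pi * Complex.I * (A : ℂ) * (j : ℂ) ^ 3 / (c : ℂ))

open Finset

def e (x : ℂ) : ℂ := Complex.exp (2 * Real.pi * Complex.I * x)

lemma e_intCast (n : ℤ) : e n = 1 := by
  rw [e, mul_comm]
  exact Complex.exp_int_mul_two_pi_mul_I n

lemma e_add (x y : ℂ) : e (x + y) = e x * e y := by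
  simp only [e, mul_add, Complex.exp_add]

lemma e_nat_mul (v : ℕ) (x : ℂ) : e (v * x) = e x ^ v := by
  rw [e, e, ← Complex.exp_nat_mul]
  ring_nf

lemma e_intCast_div_eq_one_iff {n : ℕ} (hn : 0 < n) (a : ℤ) :
    e (a / n) = 1 ↔ (n : ℤ) ∣ a := by
  have hn' : (n : ℂ) ≠ 0 := Nat.cast_ne_zero.mpr hn.ne'
  rw [e, Complex.exp_eq_one_iff]
  constructor
  · rintro ⟨m, hm⟩
    field_simp at hm
    exact ⟨m, by exact_mod_cast hm⟩
  · rintro ⟨b, rfl⟩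
    exact ⟨b, by push_cast; field_simp⟩

lemma sum_range_e_mul_div {n : ℕ} (hn : 0 < n) (a : ℤ) :
    ∑ v ∈ range n, e (a * v / n) = if (n : ℤ) ∣ a then (n : ℂ) else 0 := by
  have hpow (v : ℕ) : e (a * v / n) = e (a / n) ^ v := by
    rw [← e_nat_mul]; ring_nf
  simp only [hpow]
  split_ifs with h
  · simp [(e_intCast_div_eq_one_iff hn a).mpr h]
  · have hne : e (a / n) ≠ 1 := mt (e_intCast_div_eq_one_iff hn a).mp h
    have hn' : (n : ℂ) ≠ 0 := Nat.cast_ne_zero.mpr hn.ne'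
    rw [geom_sum_eq hne, ← hpow, mul_div_cancel_right₀ _ hn', e_intCast]
    simp

lemma sum_range_mul {M : Type*} [AddCommMonoid M] (f : ℕ → M) (a b : ℕ) :
    ∑ j ∈ range (a * b), f j = ∑ w ∈ range b, ∑ u ∈ range a, f (u + a * w) := by
  induction b with
  | zero => simp
  | succ n ih =>
    rw [sum_range_succ, ← ih, Nat.mul_succ, sum_range_add]
    simp [add_comm]

lemma sum_range_mul_ite_dvd {M : Type*} [AddCommMonoid M] (f : ℕ → M) {p : ℕ} (hp : 0 < p)
    (n : ℕ) :
    ∑ u ∈ range (p * n), (if p ∣ u then f u else 0) = ∑ m ∈ range n, f (p * m) := by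
  rw [sum_range_mul]
  refine sum_congr rfl fun m _ => ?_
  rw [sum_eq_single_of_mem 0 (mem_range.mpr hp), zero_add, if_pos (dvd_mul_right p m)]
  intro r hr hr0
  have hndvd : ¬ p ∣ r + p * m := fun h =>
    hr0 (Nat.eq_zero_of_dvd_of_lt ((Nat.dvd_add_left (dvd_mul_right p m)).mp h)
      (mem_range.mp hr))
  rw [if_neg hndvd]

lemma S_eq_sum_e (A : ℤ) (c : ℕ) : S A c = ∑ j ∈ range c, e (A * (j : ℂ) ^ 3 / c) := by
  unfold S e
  congr 1; ext j; congr 1; ring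

lemma prime_sq_dvd_three_mul_mul_sq_iff {p : ℕ} (hp : p.Prime) {A : ℤ} (hA : Int.gcd A p = 1)
    (u : ℕ) : (p : ℤ) ^ 2 ∣ 3 * A * (u : ℤ) ^ 2 ↔ p ∣ u := by
  constructor
  · intro h
    by_contra hu
    have hcop : IsCoprime ((p : ℤ) ^ 2) (A * (u : ℤ) ^ 2) := by
      refine (IsCoprime.mul_right ?_ (IsCoprime.pow_right ?_)).pow_left
      · rwa [Int.isCoprime_iff_gcd_eq_one, Int.gcd_comm]
      · rw [Int.isCoprime_iff_gcd_eq_one, Int.gcd_natCast_natCast]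
        exact hp.coprime_iff_not_dvd.mpr hu
    have h3 : (p : ℤ) ^ 2 ∣ 3 := hcop.dvd_of_dvd_mul_right (by rwa [mul_assoc] at h)
    have hle : (p : ℤ) ^ 2 ≤ 3 := Int.le_of_dvd (by norm_num) h3
    have hp2 : (2 : ℤ) ≤ p := by exact_mod_cast hp.two_le
    nlinarith
  · rintro ⟨m, rfl⟩
    exact ⟨3 * A * m ^ 2, by push_cast; ring⟩

lemma e_cube_add_mul_pow (A : ℤ) {q : ℕ} (hq : q ≠ 0) (t u w : ℕ) :
    e (A * ((u + q ^ (t + 2) * w : ℕ) : ℂ) ^ 3 / (q ^ (t + 4) : ℕ)) =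
      e (A * (u : ℂ) ^ 3 / (q ^ (t + 4) : ℕ)) * e ((3 * A * u ^ 2 : ℤ) * w / (q ^ 2 : ℕ)) := by
  have hq' : (q : ℂ) ≠ 0 := Nat.cast_ne_zero.mpr hq
  have hsplit : A * ((u + q ^ (t + 2) * w : ℕ) : ℂ) ^ 3 / (q ^ (t + 4) : ℕ) =
      A * (u : ℂ) ^ 3 / (q ^ (t + 4) : ℕ) + ((3 * A * u ^ 2 : ℤ) * w / (q ^ 2 : ℕ) +
        ((3 * A * u * w ^ 2 * q ^ t + A * w ^ 3 * q ^ (2 * t + 2) : ℤ) : ℂ)) := by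
    push_cast
    field_simp
    ring
  rw [hsplit, e_add, e_add, e_intCast, mul_one]

lemma S_prime_pow_add_four {p : ℕ} (hp : p.Prime) {A : ℤ} (hA : Int.gcd A p = 1) (t : ℕ) :
    S A (p ^ (t + 4)) = (p : ℂ) ^ 2 * S A (p ^ (t + 1)) := by
  set f : ℕ → ℂ := fun u => e (A * (u : ℂ) ^ 3 / (p ^ (t + 4) : ℕ))
  have hsum_w (u : ℕ) : ∑ w ∈ range (p ^ 2), f u * e ((3 * A * u ^ 2 : ℤ) * w / (p ^ 2 : ℕ)) =
      (p : ℂ) ^ 2 * if p ∣ u then f u else 0 := by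
    rw [← mul_sum, sum_range_e_mul_div (pow_pos hp.pos 2)]
    push_cast
    simp only [prime_sq_dvd_three_mul_mul_sq_iff hp hA]
    split_ifs <;> ring
  have hf (m : ℕ) : f (p * m) = e (A * (m : ℂ) ^ 3 / (p ^ (t + 1) : ℕ)) := by
    have hp' : (p : ℂ) ≠ 0 := Nat.cast_ne_zero.mpr hp.ne_zero
    simp only [f]
    congr 1
    push_cast
    field_simp
    ring
  calc S A (p ^ (t + 4))
      = ∑ u ∈ range (p ^ (t + 2)), ∑ w ∈ range (p ^ 2),
          f u * e ((3 * A * u ^ 2 : ℤ) * w / (p ^ 2 : ℕ)) := by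
        rw [S_eq_sum_e, show p ^ (t + 4) = p ^ (t + 2) * p ^ 2 by ring, sum_range_mul,
          sum_comm]
        simp only [f, ← e_cube_add_mul_pow A hp.ne_zero, ← pow_add]
    _ = (p : ℂ) ^ 2 * ∑ u ∈ range (p * p ^ (t + 1)), if p ∣ u then f u else 0 := by
        simp only [hsum_w, ← mul_sum, ← pow_succ']
    _ = (p : ℂ) ^ 2 * S A (p ^ (t + 1)) := by
        rw [sum_range_mul_ite_dvd f hp.pos, S_eq_sum_e]
        simp only [hf]

lemma S_prime_pow_three_mul_add_one {p : ℕ} (hp : p.Prime) {A : ℤ} (hA : Int.gcd A p = 1)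
    (m : ℕ) : S A (p ^ (3 * m + 1)) = (p : ℂ) ^ (2 * m) * S A p := by
  induction m with
  | zero => simp
  | succ n ih =>
    rw [show 3 * (n + 1) + 1 = 3 * n + 4 by ring, S_prime_pow_add_four hp hA, ih]
    ring

theorem stmt16_general (p : ℕ) (hp : p.Prime) (A : ℤ) (hA : Int.gcd A p = 1)
    (k : ℕ) (h3 : k % 3 = 1) :
    S A (p ^ k) = (p : ℂ) ^ ((2 * k - 2) / 3) * S A p := by
  obtain ⟨m, rfl⟩ : ∃ m, k = 3 * m + 1 := ⟨k / 3, by omega⟩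
  rw [show (2 * (3 * m + 1) - 2) / 3 = 2 * m by omega]
  exact S_prime_pow_three_mul_add_one hp hA m

theorem stmt16 (p : ℕ) (hp : p.Prime) (A : ℤ) (hA : Int.gcd A p = 1)
    (k : ℕ) (hk : 0 < k) (h3 : k % 3 = 1) :
    S A (p ^ k) = (p : ℂ) ^ ((2 * k - 2) / 3) * S A p :=
  stmt16_general p hp A hA k h3

end CubicAppendix
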